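/- Let 𝒞 = {X^n(m,k)} for (m,k) ∈ [2^{nR}] × [2^{nR_0}] be a random codebook with each codeword drawn independently according to ∏_{i=1}^n P_X. Let X^n be i.i.d. P_X, K ~ Unif[2^{nR_0}] independent of X^n, let M be generated by the likelihood encoder P_{M|X^n K}(m | x^n, k) ∝ ∏_{i=1}^n 1{x_i = x_i(m,k)} (with an arbitrary index chosen if no codeword for key k equals x^n), and let the decoder output X̂^n = X^n(M, K). If R > H(X), then lim_{n→∞} E_𝒞 P[ X^n ≠ X^n(M,K) ] = 0. -/

import Mathlib

open scoped BigOperators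
open Classical Filter

def IsPMF {A : Type*} [Fintype A] (p : A → ℝ) : Prop :=
  (∀ a, 0 ≤ p a) ∧ ∑ a, p a = 1

noncomputable def entropy {A : Type*} [Fintype A] (p : A → ℝ) : ℝ :=
  -∑ a, p a * Real.logb 2 (p a)

noncomputable def iidPMF {X : Type*} [Fintype X] (P : X → ℝ) (n : ℕ) : (Fin n → X) → ℝ :=
  fun x => ∏ i, P (x i)

/-- Number of messages/keys at rate `R` and blocklength `n`. -/
noncomputable def nExp (R : ℝ) (n : ℕ) : ℕ := max 1 (Nat.floor ((2:ℝ) ^ (R * n)))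

/-- The likelihood encoder for a codebook `C = {x^n(m,k)}` and exact reconstruction:
`P(m|x^n,k) ∝ ∏ᵢ 1{xᵢ = xᵢ(m,k)}`, with an arbitrary (uniform) choice when no codeword
for key `k` equals `x^n`. -/
noncomputable def likEnc {X : Type*} [Fintype X] {n M K : ℕ}
    (C : Fin M × Fin K → (Fin n → X)) (x : Fin n → X) (k : Fin K) (m : Fin M) : ℝ :=
  if (Finset.univ.filter (fun m' : Fin M => C (m', k) = x)).card = 0 then (M : ℝ)⁻¹
  else if C (m, k) = x
    then ((Finset.univ.filter (fun m' : Fin M => C (m', k) = x)).card : ℝ)⁻¹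
    else 0

/-! ### Auxiliary lemmas -/

section Aux

set_option maxHeartbeats 2000000

lemma sum_prod_fn {Y A : Type*} [Fintype Y] [Fintype A] [DecidableEq A] (f : A → Y → ℝ) :
    ∑ C : A → Y, ∏ a, f a (C a) = ∏ a, ∑ y, f a y := by
  rw [Finset.prod_univ_sum, Fintype.piFinset_univ]

lemma L1 {X : Type*} [Fintype X] {n M K : ℕ} (hM : 0 < M)
    (C : Fin M × Fin K → (Fin n → X)) (x : Fin n → X) (k : Fin K) :
    ∑ m : Fin M, likEnc C x k m * (if x ≠ C (m, k) then (1:ℝ) else 0)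
      = if (Finset.univ.filter (fun m' : Fin M => C (m', k) = x)).card = 0 then 1 else 0 := by
  by_cases h : (Finset.univ.filter (fun m' : Fin M => C (m', k) = x)).card = 0
  · have hne : ∀ m : Fin M, C (m, k) ≠ x := by
      intro m hm
      have : m ∈ Finset.univ.filter (fun m' : Fin M => C (m', k) = x) := by
        simp [hm]
      simp [Finset.card_eq_zero.mp h] at this
    have : ∀ m : Fin M, likEnc C x k m * (if x ≠ C (m, k) then (1:ℝ) else 0) = (M:ℝ)⁻¹ := by
      intro m
      simp [likEnc, h, (hne m), Ne.symm (hne m)]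
    rw [Finset.sum_congr rfl fun m _ => this m]
    simp [h, Finset.card_univ]
    field_simp
  · have : ∀ m : Fin M, likEnc C x k m * (if x ≠ C (m, k) then (1:ℝ) else 0) = 0 := by
      intro m
      by_cases hc : C (m, k) = x
      · simp [likEnc, h, hc]
      · simp [likEnc, h, hc, Ne.symm hc]
    rw [Finset.sum_congr rfl fun m _ => this m]
    simp [h]

lemma L2 {X : Type*} [Fintype X] {n M K : ℕ}
    (q : (Fin n → X) → ℝ) (hq : ∑ y, q y = 1) (x : Fin n → X) (k : Fin K) :
    ∑ C : Fin M × Fin K → (Fin n → X), (∏ mk, q (C mk)) *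
      (if (Finset.univ.filter (fun m' : Fin M => C (m', k) = x)).card = 0 then (1:ℝ) else 0)
    = (1 - q x) ^ M := by
  have key : ∀ C : Fin M × Fin K → (Fin n → X),
      (if (Finset.univ.filter (fun m' : Fin M => C (m', k) = x)).card = 0 then (1:ℝ) else 0)
      = ∏ mk : Fin M × Fin K, (if mk.2 = k ∧ C mk = x then (0:ℝ) else 1) := by
    intro C
    by_cases h : (Finset.univ.filter (fun m' : Fin M => C (m', k) = x)).card = 0
    · rw [if_pos h]
      refine (Finset.prod_eq_one ?_).symm
      rintro ⟨m', k'⟩ -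
      have : ¬ (k' = k ∧ C (m', k') = x) := by
        rintro ⟨rfl, hc⟩
        have : m' ∈ Finset.univ.filter (fun m'' : Fin M => C (m'', k') = x) := by simp [hc]
        simp [Finset.card_eq_zero.mp h] at this
      simp [this]
    · rw [if_neg h]
      obtain ⟨m', hm'⟩ := Finset.card_pos.mp (Nat.pos_of_ne_zero h)
      have hc : C (m', k) = x := by simpa using hm'
      refine (Finset.prod_eq_zero (Finset.mem_univ (m', k)) ?_).symm
      simp [hc]
  have step1 : ∑ C : Fin M × Fin K → (Fin n → X), (∏ mk, q (C mk)) *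
      (if (Finset.univ.filter (fun m' : Fin M => C (m', k) = x)).card = 0 then (1:ℝ) else 0)
      = ∑ C : Fin M × Fin K → (Fin n → X), ∏ mk : Fin M × Fin K,
          (q (C mk) * (if mk.2 = k ∧ C mk = x then (0:ℝ) else 1)) := by
    refine Finset.sum_congr rfl fun C _ => ?_
    rw [key C, ← Finset.prod_mul_distrib]
  have step2 := sum_prod_fn (Y := Fin n → X) (A := Fin M × Fin K)
      (fun mk y => q y * (if mk.2 = k ∧ y = x then (0:ℝ) else 1))
  rw [step1, step2]
  have step3 : ∀ mk : Fin M × Fin K,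
      (∑ y : Fin n → X, q y * (if mk.2 = k ∧ y = x then (0:ℝ) else 1))
      = (if mk.2 = k then 1 - q x else 1) := by
    intro mk
    by_cases h : mk.2 = k
    · rw [if_pos h]
      have e : ∀ y : Fin n → X, q y * (if mk.2 = k ∧ y = x then (0:ℝ) else 1)
          = q y - (if y = x then q x else 0) := by
        intro y
        by_cases hy : y = x
        · simp [h, hy]
        · simp [hy]
      rw [Finset.sum_congr rfl fun y _ => e y, Finset.sum_sub_distrib, hq,
        Finset.sum_ite_eq' Finset.univ x (fun _ => q x)]
      simp
    · rw [if_neg h]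
      have e : ∀ y : Fin n → X, q y * (if mk.2 = k ∧ y = x then (0:ℝ) else 1) = q y := by
        intro y; simp [h]
      rw [Finset.sum_congr rfl fun y _ => e y, hq]
  rw [Finset.prod_congr rfl fun mk _ => step3 mk]
  rw [Fintype.prod_prod_type]
  simp [Finset.prod_ite_eq' Finset.univ k (fun _ => 1 - q x)]

lemma sum_iidPMF {X : Type*} [Fintype X] (P : X → ℝ) (hP : ∑ a, P a = 1) (n : ℕ) :
    ∑ x : Fin n → X, iidPMF P n x = 1 := by
  have := sum_prod_fn (Y := X) (A := Fin n) (fun _ y => P y)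
  simpa [iidPMF, hP] using this

lemma reduction {X : Type*} [Fintype X] (P : X → ℝ) (hP : IsPMF P) (R R0 : ℝ) (n : ℕ) :
    ∑ C : Fin (nExp R n) × Fin (nExp R0 n) → (Fin n → X),
          (∏ mk, iidPMF P n (C mk)) *
          (∑ x : Fin n → X, ∑ k : Fin (nExp R0 n), ∑ m : Fin (nExp R n),
            iidPMF P n x * ((nExp R0 n : ℝ))⁻¹ * likEnc C x k m *
              (if x ≠ C (m, k) then (1:ℝ) else 0))
    = ∑ x : Fin n → X, iidPMF P n x * (1 - iidPMF P n x) ^ (nExp R n) := by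
  set M := nExp R n with hMdef
  set K := nExp R0 n with hKdef
  have hM : 0 < M := Nat.lt_of_lt_of_le Nat.zero_lt_one (le_max_left _ _)
  have hK : 0 < K := Nat.lt_of_lt_of_le Nat.zero_lt_one (le_max_left _ _)
  have hq := sum_iidPMF P hP.2 n
  have e1 : ∀ (C : Fin M × Fin K → (Fin n → X)) (x : Fin n → X) (k : Fin K),
      ∑ m : Fin M, iidPMF P n x * ((K : ℝ))⁻¹ * likEnc C x k m *
          (if x ≠ C (m, k) then (1:ℝ) else 0)
      = iidPMF P n x * (K : ℝ)⁻¹ *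
        (if (Finset.univ.filter (fun m' : Fin M => C (m', k) = x)).card = 0 then (1:ℝ) else 0) := by
    intro C x k
    rw [← L1 hM C x k, Finset.mul_sum]
    exact Finset.sum_congr rfl fun m _ => by ring
  have e2 : ∀ C : Fin M × Fin K → (Fin n → X),
      (∏ mk, iidPMF P n (C mk)) * (∑ x : Fin n → X, ∑ k : Fin K, ∑ m : Fin M,
        iidPMF P n x * ((K : ℝ))⁻¹ * likEnc C x k m * (if x ≠ C (m, k) then (1:ℝ) else 0))
      = ∑ x : Fin n → X, ∑ k : Fin K, (∏ mk, iidPMF P n (C mk)) * (iidPMF P n x * (K : ℝ)⁻¹ *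
          (if (Finset.univ.filter (fun m' : Fin M => C (m', k) = x)).card = 0 then (1:ℝ) else 0)) := by
    intro C
    rw [Finset.mul_sum]
    refine Finset.sum_congr rfl fun x _ => ?_
    rw [Finset.mul_sum]
    exact Finset.sum_congr rfl fun k _ => by rw [← e1 C x k, Finset.mul_sum]
  calc ∑ C : Fin M × Fin K → (Fin n → X), (∏ mk, iidPMF P n (C mk)) *
          (∑ x : Fin n → X, ∑ k : Fin K, ∑ m : Fin M,
            iidPMF P n x * ((K : ℝ))⁻¹ * likEnc C x k m * (if x ≠ C (m, k) then (1:ℝ) else 0))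
      = ∑ C : Fin M × Fin K → (Fin n → X), ∑ x : Fin n → X, ∑ k : Fin K,
          (∏ mk, iidPMF P n (C mk)) * (iidPMF P n x * (K : ℝ)⁻¹ *
            (if (Finset.univ.filter (fun m' : Fin M => C (m', k) = x)).card = 0 then (1:ℝ) else 0)) :=
        Finset.sum_congr rfl fun C _ => e2 C
    _ = ∑ x : Fin n → X, ∑ C : Fin M × Fin K → (Fin n → X), ∑ k : Fin K,
          (∏ mk, iidPMF P n (C mk)) * (iidPMF P n x * (K : ℝ)⁻¹ *
            (if (Finset.univ.filter (fun m' : Fin M => C (m', k) = x)).card = 0 then (1:ℝ) else 0)) :=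
        Finset.sum_comm
    _ = ∑ x : Fin n → X, ∑ k : Fin K, ∑ C : Fin M × Fin K → (Fin n → X),
          (∏ mk, iidPMF P n (C mk)) * (iidPMF P n x * (K : ℝ)⁻¹ *
            (if (Finset.univ.filter (fun m' : Fin M => C (m', k) = x)).card = 0 then (1:ℝ) else 0)) :=
        Finset.sum_congr rfl fun x _ => Finset.sum_comm
    _ = ∑ x : Fin n → X, ∑ k : Fin K, iidPMF P n x * (K : ℝ)⁻¹ *
          (∑ C : Fin M × Fin K → (Fin n → X), (∏ mk, iidPMF P n (C mk)) *
            (if (Finset.univ.filter (fun m' : Fin M => C (m', k) = x)).card = 0 then (1:ℝ) else 0)) := by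
        refine Finset.sum_congr rfl fun x _ => Finset.sum_congr rfl fun k _ => ?_
        rw [Finset.mul_sum]
        exact Finset.sum_congr rfl fun C _ => by ring
    _ = ∑ x : Fin n → X, ∑ k : Fin K, iidPMF P n x * (K : ℝ)⁻¹ * (1 - iidPMF P n x) ^ M := by
        refine Finset.sum_congr rfl fun x _ => Finset.sum_congr rfl fun k _ => ?_
        exact congrArg (fun t => iidPMF P n x * (K : ℝ)⁻¹ * t)
          (L2 (M := M) (K := K) (iidPMF P n) hq x k)
    _ = ∑ x : Fin n → X, iidPMF P n x * (1 - iidPMF P n x) ^ M := by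
        refine Finset.sum_congr rfl fun x _ => ?_
        rw [Finset.sum_const, Finset.card_univ, Fintype.card_fin]
        have : (K : ℝ) ≠ 0 := Nat.cast_ne_zero.mpr hK.ne'
        rw [nsmul_eq_mul]
        field_simp

lemma exists_s {X : Type*} [Fintype X] (P : X → ℝ) (hP : IsPMF P) (R : ℝ)
    (hR : entropy P < R) :
    ∃ s : ℝ, 0 < s ∧ s < 1 ∧ ∑ a, P a ^ ((1:ℝ) - s) < (2:ℝ) ^ (s * R) := by
  set F : ℝ → ℝ := fun s => (∑ a, P a ^ ((1:ℝ) - s)) - (2:ℝ) ^ (s * R) with hF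
  have hF0 : F 0 = 0 := by
    simp only [hF, sub_zero, Real.rpow_one, mul_comm, zero_mul, Real.rpow_zero]
    rw [hP.2]; norm_num
  have hsummand : ∀ a : X, HasDerivAt (fun s : ℝ => P a ^ ((1:ℝ) - s))
      (-(P a * Real.log (P a))) 0 := by
    intro a
    rcases eq_or_lt_of_le (hP.1 a) with h0 | hpos
    · have hev : (fun s : ℝ => P a ^ ((1:ℝ) - s)) =ᶠ[nhds (0:ℝ)] fun _ => (0:ℝ) := by
        filter_upwards [Iio_mem_nhds (by norm_num : (0:ℝ) < 1)] with s hs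
        rw [← h0, Real.zero_rpow (by simp only [Set.mem_Iio] at hs; linarith)]
      have h := hasDerivAt_const (0:ℝ) (0:ℝ)
      have h2 := h.congr_of_eventuallyEq hev
      simpa [← h0] using h2
    · have hbase := (Real.hasStrictDerivAt_const_rpow hpos ((1:ℝ) - 0)).hasDerivAt
      have hin : HasDerivAt (fun s : ℝ => (1:ℝ) - s) (-1) 0 := by
        simpa using (hasDerivAt_id (0:ℝ)).const_sub 1
      have := HasDerivAt.comp (0:ℝ) hbase hin
      simp [Real.rpow_one] at this; exact this
  have hsum : HasDerivAt (fun s : ℝ => ∑ a, P a ^ ((1:ℝ) - s))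
      (∑ a, -(P a * Real.log (P a))) 0 :=
    HasDerivAt.fun_sum fun a _ => hsummand a
  have h2' : HasDerivAt (fun s : ℝ => (2:ℝ) ^ (s * R)) (Real.log 2 * R) 0 := by
    have hbase := (Real.hasStrictDerivAt_const_rpow (by norm_num : (0:ℝ) < 2)
      ((0:ℝ) * R)).hasDerivAt
    have hin : HasDerivAt (fun s : ℝ => s * R) R 0 := by
      simpa using (hasDerivAt_id (0:ℝ)).mul_const R
    have := HasDerivAt.comp (0:ℝ) hbase hin
    simp only [zero_mul, Real.rpow_zero, one_mul] at this; exact this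
  have hderivF : HasDerivAt F ((∑ a, -(P a * Real.log (P a))) - Real.log 2 * R) 0 :=
    hsum.sub h2'
  have hent : ∑ a, -(P a * Real.log (P a)) = entropy P * Real.log 2 := by
    unfold entropy
    rw [← Finset.sum_neg_distrib, Finset.sum_mul]
    refine Finset.sum_congr rfl fun a _ => ?_
    have hlog2 : Real.log 2 ≠ 0 := ne_of_gt (Real.log_pos (by norm_num))
    rw [Real.logb]
    field_simp
  have hlog2 : (0:ℝ) < Real.log 2 := Real.log_pos (by norm_num)
  have hD : (∑ a, -(P a * Real.log (P a))) - Real.log 2 * R < 0 := by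
    rw [hent]; nlinarith
  have hT : Tendsto (slope F 0) (nhdsWithin 0 {(0:ℝ)}ᶜ)
      (nhds ((∑ a, -(P a * Real.log (P a))) - Real.log 2 * R)) :=
    hasDerivAt_iff_tendsto_slope.mp hderivF
  have hT' : Tendsto (slope F 0) (nhdsWithin 0 (Set.Ioi (0:ℝ)))
      (nhds ((∑ a, -(P a * Real.log (P a))) - Real.log 2 * R)) :=
    hT.mono_left (nhdsWithin_mono 0 (fun x hx => ne_of_gt hx))
  have hev1 : ∀ᶠ s in nhdsWithin (0:ℝ) (Set.Ioi 0), slope F 0 s < 0 :=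
    hT'.eventually (gt_mem_nhds hD)
  have hev2 : ∀ᶠ s in nhdsWithin (0:ℝ) (Set.Ioi 0), (0:ℝ) < s :=
    eventually_mem_nhdsWithin
  have hev3 : ∀ᶠ s in nhdsWithin (0:ℝ) (Set.Ioi 0), s < 1 :=
    Filter.Eventually.filter_mono nhdsWithin_le_nhds
      (Filter.Tendsto.eventually_lt_const (by norm_num) (Continuous.tendsto continuous_id 0))
  obtain ⟨s, h1, h2, h3⟩ := (hev1.and (hev2.and hev3)).exists
  refine ⟨s, h2, h3, ?_⟩
  have hslope : slope F 0 s = F s / s := by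
    rw [slope_def_field, hF0, sub_zero, sub_zero]
  rw [hslope] at h1
  have hFs : F s < 0 := by
    rcases div_neg_iff.mp h1 with ⟨ha, hb⟩ | ⟨ha, hb⟩
    · linarith
    · exact ha
  simpa [hF, sub_neg] using hFs

lemma rpow_le_exp' {u s : ℝ} (hu : 0 < u) (hs0 : 0 < s) (hs1 : s ≤ 1) :
    u ^ s ≤ Real.exp u := by
  rcases le_total u 1 with h | h
  · calc u ^ s ≤ 1 ^ s := Real.rpow_le_rpow hu.le h hs0.le
    _ = 1 := Real.one_rpow s
    _ ≤ Real.exp u := by linarith [Real.add_one_le_exp u]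
  · calc u ^ s ≤ u ^ (1:ℝ) := Real.rpow_le_rpow_of_exponent_le h hs1
    _ = u := Real.rpow_one u
    _ ≤ Real.exp u := by linarith [Real.add_one_le_exp u]

lemma term_bound {p : ℝ} (hp0 : 0 ≤ p) (hp1 : p ≤ 1) {M : ℕ} (hM : 0 < M)
    {s : ℝ} (hs0 : 0 < s) (hs1 : s < 1) :
    p * (1 - p) ^ M ≤ p ^ ((1:ℝ) - s) * (M : ℝ) ^ (-s) := by
  have hMpos : (0:ℝ) < M := Nat.cast_pos.mpr hM
  rcases eq_or_lt_of_le hp0 with h0 | hp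
  · rw [← h0, Real.zero_rpow (by linarith : (1:ℝ) - s ≠ 0)]
    simp
  · have hu : (0:ℝ) < p * M := mul_pos hp hMpos
    have h1 : (1 - p) ^ M ≤ Real.exp (-(p * M)) := by
      have e1 : (1 - p) ≤ Real.exp (-p) := by linarith [Real.add_one_le_exp (-p)]
      calc (1 - p) ^ M ≤ (Real.exp (-p)) ^ M :=
            pow_le_pow_left₀ (by linarith) e1 M
        _ = Real.exp (-(p * M)) := by
            rw [← Real.exp_nat_mul]; ring_nf
    have h2 : Real.exp (-(p * M)) ≤ (p * M) ^ (-s) := by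
      have := rpow_le_exp' hu hs0 hs1.le
      rw [Real.exp_neg, Real.rpow_neg hu.le]
      exact inv_anti₀ (Real.rpow_pos_of_pos hu s) this
    calc p * (1 - p) ^ M ≤ p * (p * M) ^ (-s) :=
          mul_le_mul_of_nonneg_left (h1.trans h2) hp.le
      _ = p ^ ((1:ℝ) - s) * (M : ℝ) ^ (-s) := by
          rw [Real.mul_rpow hp.le hMpos.le, show (1:ℝ) - s = 1 + (-s) by ring,
            Real.rpow_add hp, Real.rpow_one]
          ring

lemma nExp_ge (R : ℝ) (n : ℕ) : (2:ℝ) ^ (R * n) ≤ 2 * (nExp R n : ℝ) := by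
  set t := (2:ℝ) ^ (R * n) with ht
  have htpos : 0 < t := Real.rpow_pos_of_pos (by norm_num) _
  have hone : (1:ℕ) ≤ nExp R n := le_max_left _ _
  rcases le_total t 2 with h | h
  · have : (1:ℝ) ≤ (nExp R n : ℝ) := by exact_mod_cast hone
    linarith
  · have hfl : (Nat.floor t : ℝ) ≤ (nExp R n : ℝ) := by
      exact_mod_cast le_max_right 1 (Nat.floor t)
    have : t - 1 ≤ (Nat.floor t : ℝ) := by
      have := Nat.lt_floor_add_one t
      linarith
    linarith

lemma iid_nonneg {X : Type*} [Fintype X] {P : X → ℝ} (hP : IsPMF P) (n : ℕ)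
    (x : Fin n → X) : 0 ≤ iidPMF P n x :=
  Finset.prod_nonneg fun i _ => hP.1 (x i)

lemma iid_le_one {X : Type*} [Fintype X] {P : X → ℝ} (hP : IsPMF P) (n : ℕ)
    (x : Fin n → X) : iidPMF P n x ≤ 1 := by
  refine Finset.prod_le_one (fun i _ => hP.1 (x i)) (fun i _ => ?_)
  calc P (x i) ≤ ∑ a, P a := Finset.single_le_sum (fun a _ => hP.1 a) (Finset.mem_univ (x i))
    _ = 1 := hP.2

lemma sum_iid_rpow {X : Type*} [Fintype X] {P : X → ℝ} (hP : IsPMF P) (n : ℕ) (s : ℝ) :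
    ∑ x : Fin n → X, (iidPMF P n x) ^ ((1:ℝ) - s) = (∑ a, P a ^ ((1:ℝ) - s)) ^ n := by
  have e : ∀ x : Fin n → X, (iidPMF P n x) ^ ((1:ℝ) - s) = ∏ i, (P (x i)) ^ ((1:ℝ) - s) := by
    intro x
    rw [iidPMF]
    exact (Real.finset_prod_rpow Finset.univ (fun i => P (x i)) (fun i _ => hP.1 (x i)) _).symm
  rw [Finset.sum_congr rfl fun x _ => e x]
  have := sum_prod_fn (Y := X) (A := Fin n) (fun _ y => P y ^ ((1:ℝ) - s))
  rw [this, Finset.prod_const, Finset.card_univ, Fintype.card_fin]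

end Aux

/-- **Lossless reconstruction via the likelihood encoder.** With `X^n` i.i.d. `P`,
`K` uniform on `[2^{nR₀}]` independent of `X^n`, `M` generated by the likelihood
encoder for the codebook `C`, and decoder output `X̂^n = x^n(M,K)`: if `R > H(X)`,
the expected (over the random codebook, codewords i.i.d. `∏ P_X`) error probability
`P[X^n ≠ x^n(M,K)]` vanishes as `n → ∞`. -/
theorem likelihood_encoder_lossless
    {X : Type*} [Fintype X] [Nonempty X]
    (P : X → ℝ) (hP : IsPMF P) (R R0 : ℝ) (hR : entropy P < R) :
    Tendsto (fun n : ℕ =>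
        ∑ C : Fin (nExp R n) × Fin (nExp R0 n) → (Fin n → X),
          (∏ mk, iidPMF P n (C mk)) *
          (∑ x : Fin n → X, ∑ k : Fin (nExp R0 n), ∑ m : Fin (nExp R n),
            iidPMF P n x * ((nExp R0 n : ℝ))⁻¹ * likEnc C x k m *
              (if x ≠ C (m, k) then (1:ℝ) else 0)))
      atTop (nhds 0) := by
  refine Tendsto.congr (fun n => (reduction P hP R R0 n).symm) ?_
  obtain ⟨s, hs0, hs1, hsc⟩ := exists_s P hP R hR
  set c := ∑ a, P a ^ ((1:ℝ) - s) with hc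
  have hc0 : 0 ≤ c := Finset.sum_nonneg fun a _ => Real.rpow_nonneg (hP.1 a) _
  set r := (2:ℝ) ^ (-(s * R)) * c with hrdef
  have h2pos : (0:ℝ) < (2:ℝ) ^ (-(s * R)) := Real.rpow_pos_of_pos (by norm_num) _
  have hr0 : 0 ≤ r := mul_nonneg h2pos.le hc0
  have hr1 : r < 1 := by
    calc r < (2:ℝ) ^ (-(s * R)) * (2:ℝ) ^ (s * R) := by
          exact mul_lt_mul_of_pos_left hsc h2pos
      _ = 1 := by
          rw [← Real.rpow_add (by norm_num : (0:ℝ) < 2)]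
          norm_num
  -- the key bound
  have hbound : ∀ n : ℕ,
      ∑ x : Fin n → X, iidPMF P n x * (1 - iidPMF P n x) ^ (nExp R n)
        ≤ (2:ℝ) ^ s * r ^ n := by
    intro n
    have hM : 0 < nExp R n := Nat.lt_of_lt_of_le Nat.zero_lt_one (le_max_left _ _)
    have hMpos : (0:ℝ) < (nExp R n : ℝ) := Nat.cast_pos.mpr hM
    have step1 : ∑ x : Fin n → X, iidPMF P n x * (1 - iidPMF P n x) ^ (nExp R n)
        ≤ ∑ x : Fin n → X, (iidPMF P n x) ^ ((1:ℝ) - s) * (nExp R n : ℝ) ^ (-s) :=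
      Finset.sum_le_sum fun x _ =>
        term_bound (iid_nonneg hP n x) (iid_le_one hP n x) hM hs0 hs1
    have step2 : ∑ x : Fin n → X, (iidPMF P n x) ^ ((1:ℝ) - s) * (nExp R n : ℝ) ^ (-s)
        = (nExp R n : ℝ) ^ (-s) * c ^ n := by
      rw [← Finset.sum_mul, sum_iid_rpow hP n s, mul_comm]
    -- bound on (nExp R n)^(-s)
    have hfloor : (2:ℝ) ^ (R * n) / 2 ≤ (nExp R n : ℝ) := by
      have := nExp_ge R n
      linarith
    have hhalf : (0:ℝ) < (2:ℝ) ^ (R * n) / 2 := by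
      have : (0:ℝ) < (2:ℝ) ^ (R * n) := Real.rpow_pos_of_pos (by norm_num) _
      linarith
    have step3 : (nExp R n : ℝ) ^ (-s) ≤ ((2:ℝ) ^ (R * n) / 2) ^ (-s) :=
      Real.rpow_le_rpow_of_nonpos hhalf hfloor (by linarith)
    have step4 : ((2:ℝ) ^ (R * n) / 2) ^ (-s)
        = (2:ℝ) ^ s * ((2:ℝ) ^ (-(s * R))) ^ n := by
      rw [Real.div_rpow (by positivity) (by norm_num)]
      rw [← Real.rpow_natCast ((2:ℝ) ^ (-(s * R))) n, ← Real.rpow_mul (by norm_num : (0:ℝ) ≤ 2)]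
      rw [← Real.rpow_mul (by norm_num : (0:ℝ) ≤ 2)]
      rw [Real.rpow_neg (by norm_num : (0:ℝ) ≤ 2) s, div_inv_eq_mul]
      rw [← Real.rpow_add (by norm_num : (0:ℝ) < 2), ← Real.rpow_add (by norm_num : (0:ℝ) < 2)]
      congr 1
      ring
    calc ∑ x : Fin n → X, iidPMF P n x * (1 - iidPMF P n x) ^ (nExp R n)
        ≤ (nExp R n : ℝ) ^ (-s) * c ^ n := by rw [← step2]; exact step1
      _ ≤ ((2:ℝ) ^ s * ((2:ℝ) ^ (-(s * R))) ^ n) * c ^ n := by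
          refine mul_le_mul_of_nonneg_right ?_ (pow_nonneg hc0 n)
          rw [← step4]; exact step3
      _ = (2:ℝ) ^ s * r ^ n := by
          rw [hrdef, mul_pow]; ring
  have hnonneg : ∀ n : ℕ,
      0 ≤ ∑ x : Fin n → X, iidPMF P n x * (1 - iidPMF P n x) ^ (nExp R n) := by
    intro n
    refine Finset.sum_nonneg fun x _ => mul_nonneg (iid_nonneg hP n x) ?_
    exact pow_nonneg (by linarith [iid_le_one hP n x]) _
  refine squeeze_zero hnonneg hbound ?_
  have := (tendsto_pow_atTop_nhds_zero_of_lt_one hr0 hr1).const_mul ((2:ℝ) ^ s)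
  simpa using this
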